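/- arXiv:2505.14110 — 3 statements merged into one kernel-verified Lean document; each statement's English description precedes it below -/
import Mathlib

section
/- Let A, B, C ∈ ℝ³ be non-collinear points and r_A, r_B, r_C > 0 radii with dist(X, Y) ≥ r_X + r_Y for all distinct X, Y ∈ {A, B, C} (interior-disjoint balls). Suppose there exist O ∈ ℝ³ and R > 0 with dist(O, X) = r_X + R for each X ∈ {A, B, C} (a sphere externally tangent to the three balls). Then there exist a point P in the affine plane spanned by A, B, C and a radius ρ with 0 < ρ ≤ R such that dist(P, X) = r_X + ρ for each X ∈ {A, B, C}. (Consequently, every face of an FM-tetrahedron admits a support circle of radius less than √2 − 1 in its own plane, i.e., is an FM-triangle.) -/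
open scoped RealInnerProductSpace

private lemma sq_le_imp' {d r : ℝ} (_hd : 0 ≤ d) (hr : 0 ≤ r) (h : d ^ 2 ≤ r ^ 2) : d ≤ r := by
  nlinarith

/-- If a sphere of radius R is externally tangent to three interior-disjoint balls
centered at non-collinear points A, B, C, then there is a point P in the plane of
A, B, C and a radius 0 < ρ ≤ R with a sphere centered at P externally tangent to
the three balls.  (Hence every face of an FM-tetrahedron is an FM-triangle.) -/
theorem face_is_FM_triangle
    (A B C : EuclideanSpace ℝ (Fin 3)) (rA rB rC : ℝ)
    (hrA : 0 < rA) (hrB : 0 < rB) (hrC : 0 < rC)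
    (haff : AffineIndependent ℝ ![A, B, C])
    (hAB : rA + rB ≤ dist A B) (hAC : rA + rC ≤ dist A C) (hBC : rB + rC ≤ dist B C)
    (O : EuclideanSpace ℝ (Fin 3)) (R : ℝ) (hR : 0 < R)
    (hOA : dist O A = rA + R) (hOB : dist O B = rB + R) (hOC : dist O C = rC + R) :
    ∃ P ∈ affineSpan ℝ ({A, B, C} : Set (EuclideanSpace ℝ (Fin 3))), ∃ ρ : ℝ,
      0 < ρ ∧ ρ ≤ R ∧ dist P A = rA + ρ ∧ dist P B = rB + ρ ∧ dist P C = rC + ρ := by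
  classical
  have hcol : ¬ Collinear ℝ ({A, B, C} : Set (EuclideanSpace ℝ (Fin 3))) :=
    affineIndependent_iff_not_collinear_set.mp haff
  -- a generic non-collinearity helper
  have hne : ∀ v : EuclideanSpace ℝ (Fin 3),
      (∃ s : ℝ, B - A = s • v) → (∃ s : ℝ, C - A = s • v) → False := by
    rintro v ⟨s, hs⟩ ⟨t, ht⟩
    apply hcol
    rw [collinear_iff_of_mem (Set.mem_insert A _)]
    refine ⟨v, ?_⟩
    intro p hp
    simp only [Set.mem_insert_iff, Set.mem_singleton_iff] at hp
    rcases hp with rfl | rfl | rfl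
    · exact ⟨0, by simp⟩
    · refine ⟨s, ?_⟩
      rw [vadd_eq_add, ← hs]
      abel
    · refine ⟨t, ?_⟩
      rw [vadd_eq_add, ← ht]
      abel
  set u : EuclideanSpace ℝ (Fin 3) := B - A with huv
  set w : EuclideanSpace ℝ (Fin 3) := C - A with hwv
  set a : ℝ := ⟪u, u⟫ with ha
  set b : ℝ := ⟪u, w⟫ with hb
  set k : ℝ := ⟪w, w⟫ with hk
  have ha' : a = ‖u‖ ^ 2 := by rw [ha, real_inner_self_eq_norm_sq]
  have hk' : k = ‖w‖ ^ 2 := by rw [hk, real_inner_self_eq_norm_sq]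
  -- the Gram determinant is positive
  have hCS : b * b ≤ a * k := by
    rw [ha, hb, hk]; exact real_inner_mul_inner_self_le u w
  have hD : 0 < a * k - b * b := by
    rcases lt_or_eq_of_le hCS with h | h
    · linarith
    · exfalso
      have hb2 : b ^ 2 = (‖u‖ * ‖w‖) ^ 2 := by rw [mul_pow, ← ha', ← hk', ← h, pow_two]
      rcases eq_or_ne u 0 with hu0 | hu0
      · refine hne w ⟨0, ?_⟩ ⟨1, ?_⟩
        · rw [zero_smul]; exact hu0
        · exact (one_smul ℝ w).symm
      · have hun : ‖u‖ ≠ 0 := norm_ne_zero_iff.mpr hu0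
        rcases sq_eq_sq_iff_eq_or_eq_neg.mp hb2 with hsg | hsg
        · have h2 : ‖w‖ • u = ‖u‖ • w := by
            apply inner_eq_norm_mul_iff_real.mp
            rw [← hb]; exact hsg
          refine hne u ⟨1, (one_smul ℝ u).symm⟩ ⟨‖u‖⁻¹ * ‖w‖, ?_⟩
          rw [mul_smul, h2, smul_smul, inv_mul_cancel₀ hun, one_smul]
        · have h2 : ‖-w‖ • u = ‖u‖ • (-w) := by
            apply inner_eq_norm_mul_iff_real.mp
            rw [inner_neg_right, ← hb, hsg, norm_neg]; ring
          refine hne u ⟨1, (one_smul ℝ u).symm⟩ ⟨-(‖u‖⁻¹ * ‖w‖), ?_⟩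
          rw [norm_neg, smul_neg] at h2
          rw [neg_smul, mul_smul, h2, smul_neg, neg_neg, smul_smul, inv_mul_cancel₀ hun, one_smul]
  set D : ℝ := a * k - b * b with hDv
  -- coefficient functions
  set c1 : ℝ → ℝ := fun t => (a + (rA + t) ^ 2 - (rB + t) ^ 2) / 2 with hc1v
  set c2 : ℝ → ℝ := fun t => (k + (rA + t) ^ 2 - (rC + t) ^ 2) / 2 with hc2v
  set x : ℝ → ℝ := fun t => (k * c1 t - b * c2 t) / D with hxv
  set y : ℝ → ℝ := fun t => (a * c2 t - b * c1 t) / D with hyv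
  set P : ℝ → EuclideanSpace ℝ (Fin 3) := fun t => x t • u + y t • w + A with hPv
  have hDne : D ≠ 0 := by rw [hDv]; exact ne_of_gt hD
  have hxy1 : ∀ t : ℝ, x t * a + y t * b = c1 t := by
    intro t
    simp only [hxv, hyv]
    field_simp
    rw [hDv]; ring
  have hxy2 : ∀ t : ℝ, x t * b + y t * k = c2 t := by
    intro t
    simp only [hxv, hyv]
    field_simp
    rw [hDv]; ring
  have hPA : ∀ t : ℝ, P t - A = x t • u + y t • w := by
    intro t
    simp only [hPv]
    exact add_sub_cancel_right _ _
  have hinu : ∀ t : ℝ, ⟪u, P t - A⟫ = c1 t := by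
    intro t
    rw [hPA t, inner_add_right, real_inner_smul_right, real_inner_smul_right, ← ha, ← hb]
    exact hxy1 t
  have hinw : ∀ t : ℝ, ⟪w, P t - A⟫ = c2 t := by
    intro t
    rw [hPA t, inner_add_right, real_inner_smul_right, real_inner_smul_right,
      real_inner_comm u w, ← hb, ← hk]
    exact hxy2 t
  have hvnorm : ∀ t : ℝ, ‖P t - A‖ ^ 2 = x t * c1 t + y t * c2 t := by
    intro t
    rw [← real_inner_self_eq_norm_sq]
    nth_rewrite 1 [hPA t]
    rw [inner_add_left, real_inner_smul_left, real_inner_smul_left, hinu t, hinw t]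
  have keyB : ∀ Q : EuclideanSpace ℝ (Fin 3),
      ‖Q - B‖ ^ 2 = ‖Q - A‖ ^ 2 - 2 * ⟪u, Q - A⟫ + a := by
    intro Q
    have h1 : Q - B = (Q - A) - u := by rw [huv]; exact (sub_sub_sub_cancel_right Q B A).symm
    rw [h1, norm_sub_sq_real, real_inner_comm (Q - A) u, ← ha']
  have keyC : ∀ Q : EuclideanSpace ℝ (Fin 3),
      ‖Q - C‖ ^ 2 = ‖Q - A‖ ^ 2 - 2 * ⟪w, Q - A⟫ + k := by
    intro Q
    have h1 : Q - C = (Q - A) - w := by rw [hwv]; exact (sub_sub_sub_cancel_right Q C A).symm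
    rw [h1, norm_sub_sq_real, real_inner_comm (Q - A) w, ← hk']
  set φ : ℝ → ℝ := fun t => (rA + t) ^ 2 - (x t * c1 t + y t * c2 t) with hφv
  have hcont : Continuous φ := by
    rw [hφv, hxv, hyv, hc1v, hc2v]
    fun_prop
  -- φ R ≥ 0
  have hOA' : ‖O - A‖ = rA + R := by rw [← dist_eq_norm]; exact hOA
  have hOB' : ‖O - B‖ = rB + R := by rw [← dist_eq_norm]; exact hOB
  have hOC' : ‖O - C‖ = rC + R := by rw [← dist_eq_norm]; exact hOC
  have hc1R : c1 R = (a + (rA + R) ^ 2 - (rB + R) ^ 2) / 2 := by simp only [hc1v]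
  have hc2R : c2 R = (k + (rA + R) ^ 2 - (rC + R) ^ 2) / 2 := by simp only [hc2v]
  have hiu : ⟪u, O - A⟫ = c1 R := by
    have h := keyB O
    rw [hOA', hOB'] at h
    linarith [h, hc1R]
  have hiw : ⟪w, O - A⟫ = c2 R := by
    have h := keyC O
    rw [hOA', hOC'] at h
    linarith [h, hc2R]
  have hip : ⟪O - A, P R - A⟫ = x R * c1 R + y R * c2 R := by
    rw [hPA R, inner_add_right, real_inner_smul_right, real_inner_smul_right,
      ← real_inner_comm (O - A) u, hiu, ← real_inner_comm (O - A) w, hiw]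
  have hφR : 0 ≤ φ R := by
    have hexp : ‖(O - A) - (P R - A)‖ ^ 2
        = ‖O - A‖ ^ 2 - 2 * ⟪O - A, P R - A⟫ + ‖P R - A‖ ^ 2 := norm_sub_sq_real _ _
    have h1 := hvnorm R
    have h2 : ‖O - A‖ ^ 2 = (rA + R) ^ 2 := by rw [hOA']
    have h3 : 0 ≤ ‖(O - A) - (P R - A)‖ ^ 2 := sq_nonneg _
    simp only [hφv]
    linarith [hexp, hip, h1, h2, h3]
  -- φ 0 < 0
  have hφ0 : φ 0 < 0 := by
    by_contra hcon
    push_neg at hcon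
    simp only [hφv] at hcon
    have hA2 : ‖P 0 - A‖ ^ 2 ≤ rA ^ 2 := by
      have h := hvnorm 0
      have e : (rA + (0:ℝ)) ^ 2 = rA ^ 2 := by norm_num
      linarith [h, hcon, e]
    have hc10 : c1 0 = (a + rA ^ 2 - rB ^ 2) / 2 := by simp only [hc1v]; ring
    have hc20 : c2 0 = (k + rA ^ 2 - rC ^ 2) / 2 := by simp only [hc2v]; ring
    have hB2 : ‖P 0 - B‖ ^ 2 ≤ rB ^ 2 := by
      have h := keyB (P 0)
      rw [hinu 0] at h
      linarith [h, hc10, hA2]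
    have hC2 : ‖P 0 - C‖ ^ 2 ≤ rC ^ 2 := by
      have h := keyC (P 0)
      rw [hinw 0] at h
      linarith [h, hc20, hA2]
    have hdA : dist (P 0) A ≤ rA := by
      rw [dist_eq_norm]
      exact sq_le_imp' (norm_nonneg _) (le_of_lt hrA) hA2
    have hdB : dist (P 0) B ≤ rB := by
      rw [dist_eq_norm]
      exact sq_le_imp' (norm_nonneg _) (le_of_lt hrB) hB2
    have hdC : dist (P 0) C ≤ rC := by
      rw [dist_eq_norm]
      exact sq_le_imp' (norm_nonneg _) (le_of_lt hrC) hC2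
    have htri1 : dist A B ≤ dist A (P 0) + dist (P 0) B := dist_triangle _ _ _
    have htri2 : dist A C ≤ dist A (P 0) + dist (P 0) C := dist_triangle _ _ _
    have hAP : dist A (P 0) = dist (P 0) A := dist_comm _ _
    have heA : dist (P 0) A = rA := by linarith
    have heB : dist (P 0) B = rB := by linarith
    have heC : dist (P 0) C = rC := by linarith
    have hseg1 : Wbtw ℝ A (P 0) B := dist_add_dist_eq_iff.mp (by linarith)
    have hseg2 : Wbtw ℝ A (P 0) C := dist_add_dist_eq_iff.mp (by linarith)
    obtain ⟨t1, _, hP1⟩ := hseg1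
    obtain ⟨t2, _, hP2⟩ := hseg2
    have hv1 : P 0 - A = t1 • (B - A) := by
      rw [← hP1, AffineMap.lineMap_apply]
      simp [vsub_eq_sub, vadd_eq_add, add_sub_cancel_right]
    have hv2 : P 0 - A = t2 • (C - A) := by
      rw [← hP2, AffineMap.lineMap_apply]
      simp [vsub_eq_sub, vadd_eq_add, add_sub_cancel_right]
    have hPne : P 0 - A ≠ 0 := by
      intro h0
      have : P 0 = A := by
        have := sub_eq_zero.mp h0
        exact this
      rw [this] at heA
      simp at heA
      linarith
    have ht1 : t1 ≠ 0 := by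
      intro h0
      rw [h0, zero_smul] at hv1
      exact hPne hv1
    have ht2 : t2 ≠ 0 := by
      intro h0
      rw [h0, zero_smul] at hv2
      exact hPne hv2
    refine hne (P 0 - A) ⟨t1⁻¹, ?_⟩ ⟨t2⁻¹, ?_⟩
    · rw [huv, hv1, smul_smul, inv_mul_cancel₀ ht1, one_smul]
    · rw [hwv, hv2, smul_smul, inv_mul_cancel₀ ht2, one_smul]
  -- intermediate value theorem
  obtain ⟨t, htmem, hφt⟩ :=
    intermediate_value_Icc (le_of_lt hR) hcont.continuousOn ⟨le_of_lt hφ0, hφR⟩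
  have ht0 : 0 < t := by
    rcases lt_or_eq_of_le htmem.1 with h | h
    · exact h
    · exfalso; rw [← h] at hφt; linarith [hφ0, hφt.ge, hφt.le]
  have hφt' : (rA + t) ^ 2 = x t * c1 t + y t * c2 t := by
    have := hφt
    simp only [hφv] at this
    linarith
  -- membership in the plane
  have hmem : P t ∈ affineSpan ℝ ({A, B, C} : Set (EuclideanSpace ℝ (Fin 3))) := by
    have hAm : A ∈ affineSpan ℝ ({A, B, C} : Set (EuclideanSpace ℝ (Fin 3))) :=
      mem_affineSpan ℝ (by simp)
    have hud : u ∈ (affineSpan ℝ ({A, B, C} : Set (EuclideanSpace ℝ (Fin 3)))).direction := by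
      rw [direction_affineSpan]
      have h := vsub_mem_vectorSpan ℝ (show B ∈ ({A, B, C} : Set (EuclideanSpace ℝ (Fin 3))) by simp)
        (show A ∈ ({A, B, C} : Set (EuclideanSpace ℝ (Fin 3))) by simp)
      rw [huv]
      simpa [vsub_eq_sub] using h
    have hwd : w ∈ (affineSpan ℝ ({A, B, C} : Set (EuclideanSpace ℝ (Fin 3)))).direction := by
      rw [direction_affineSpan]
      have h := vsub_mem_vectorSpan ℝ (show C ∈ ({A, B, C} : Set (EuclideanSpace ℝ (Fin 3))) by simp)
        (show A ∈ ({A, B, C} : Set (EuclideanSpace ℝ (Fin 3))) by simp)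
      rw [hwv]
      simpa [vsub_eq_sub] using h
    have h := AffineSubspace.vadd_mem_of_mem_direction
      (Submodule.add_mem _ (Submodule.smul_mem _ (x t) hud) (Submodule.smul_mem _ (y t) hwd)) hAm
    simpa [hPv, vadd_eq_add] using h
  -- distances
  have hdistA : dist (P t) A = rA + t := by
    have h1 : ‖P t - A‖ ^ 2 = (rA + t) ^ 2 := by rw [hvnorm t, ← hφt']
    have hrt : (0:ℝ) ≤ rA + t := by linarith
    rw [dist_eq_norm]
    calc ‖P t - A‖ = Real.sqrt (‖P t - A‖ ^ 2) := (Real.sqrt_sq (norm_nonneg _)).symm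
      _ = Real.sqrt ((rA + t) ^ 2) := by rw [h1]
      _ = rA + t := Real.sqrt_sq hrt
  have hc1t : c1 t = (a + (rA + t) ^ 2 - (rB + t) ^ 2) / 2 := by simp only [hc1v]
  have hc2t : c2 t = (k + (rA + t) ^ 2 - (rC + t) ^ 2) / 2 := by simp only [hc2v]
  have hdistB : dist (P t) B = rB + t := by
    have h0 : ‖P t - A‖ ^ 2 = (rA + t) ^ 2 := by rw [hvnorm t, ← hφt']
    have h1 : ‖P t - B‖ ^ 2 = (rB + t) ^ 2 := by
      have h := keyB (P t)
      rw [hinu t] at h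
      linarith [h, hc1t, h0]
    have hrt : (0:ℝ) ≤ rB + t := by linarith
    rw [dist_eq_norm]
    calc ‖P t - B‖ = Real.sqrt (‖P t - B‖ ^ 2) := (Real.sqrt_sq (norm_nonneg _)).symm
      _ = Real.sqrt ((rB + t) ^ 2) := by rw [h1]
      _ = rB + t := Real.sqrt_sq hrt
  have hdistC : dist (P t) C = rC + t := by
    have h0 : ‖P t - A‖ ^ 2 = (rA + t) ^ 2 := by rw [hvnorm t, ← hφt']
    have h1 : ‖P t - C‖ ^ 2 = (rC + t) ^ 2 := by
      have h := keyC (P t)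
      rw [hinw t] at h
      linarith [h, hc2t, h0]
    have hrt : (0:ℝ) ≤ rC + t := by linarith
    rw [dist_eq_norm]
    calc ‖P t - C‖ = Real.sqrt (‖P t - C‖ ^ 2) := (Real.sqrt_sq (norm_nonneg _)).symm
      _ = Real.sqrt ((rC + t) ^ 2) := by rw [h1]
      _ = rC + t := Real.sqrt_sq hrt
  exact ⟨P t, hmem, t, ht0, htmem.2, hdistA, hdistB, hdistC⟩
end

section
/- Let A, B, C be non-collinear points in a plane Π ⊂ ℝ³ and r_A, r_B, r_C > 0 radii with dist(X, Y) ≥ r_X + r_Y for all distinct X, Y ∈ {A, B, C}. For z ≥ 0 say that a sphere of radius R > 0 is tangent at height z if there is a point P with dist(P, Π) = z and dist(P, X) = r_X + R for each X ∈ {A, B, C}. If for some z₀ > 0 there is a sphere of some positive radius tangent at height z₀, then for every z with 0 ≤ z ≤ z₀ there is a sphere of positive radius tangent at height z, and the function assigning to z ∈ [0, z₀] the smallest positive radius of a sphere tangent at height z is non-decreasing in z. -/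
set_option maxHeartbeats 1000000


open Metric

/-- A sphere of radius `R` is *tangent at height `z`* to the three balls at `A`, `B`, `C`
(with respect to the plane `Pl`) if its center `P` is at distance `z` from `Pl` and at
distance `r_X + R` from each center `X`. -/
def TangentAtHeight (Pl : AffineSubspace ℝ (EuclideanSpace ℝ (Fin 3)))
    (A B C : EuclideanSpace ℝ (Fin 3)) (rA rB rC : ℝ) (z R : ℝ) : Prop :=
  ∃ P : EuclideanSpace ℝ (Fin 3), Metric.infDist P (Pl : Set (EuclideanSpace ℝ (Fin 3))) = z ∧
    dist P A = rA + R ∧ dist P B = rB + R ∧ dist P C = rC + R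


open RealInnerProductSpace in
private lemma exists_g (Pl : AffineSubspace ℝ (EuclideanSpace ℝ (Fin 3)))
    (hPl : Module.finrank ℝ Pl.direction = 2)
    (A B C : EuclideanSpace ℝ (Fin 3)) (hA : A ∈ Pl) (hB : B ∈ Pl) (hC : C ∈ Pl)
    (haff : AffineIndependent ℝ ![A, B, C])
    (rA rB rC : ℝ) (hrA : 0 < rA) (hrB : 0 < rB) (hrC : 0 < rC)
    (hAB : rA + rB ≤ dist A B) (hAC : rA + rC ≤ dist A C) (hBC : rB + rC ≤ dist B C) :
    ∃ g : ℝ → ℝ, Continuous g ∧ g 0 < 0 ∧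
      ∀ z R : ℝ, 0 ≤ z → 0 < R →
        (TangentAtHeight Pl A B C rA rB rC z R ↔ g R = z ^ 2) := by
  set V : Submodule ℝ (EuclideanSpace ℝ (Fin 3)) := Pl.direction with hV
  set uB : EuclideanSpace ℝ (Fin 3) := B - A with huBdef
  set uC : EuclideanSpace ℝ (Fin 3) := C - A with huCdef
  have huB : uB ∈ V := by
    have := AffineSubspace.vsub_mem_direction hB hA
    simpa [vsub_eq_sub] using this
  have huC : uC ∈ V := by
    have := AffineSubspace.vsub_mem_direction hC hA
    simpa [vsub_eq_sub] using this
  -- linear independence of uB, uC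
  have hLI : ∀ a b : ℝ, a • uB + b • uC = 0 → a = 0 ∧ b = 0 := by
    intro a b hab
    have h := affineIndependent_iff.1 haff Finset.univ ![-a - b, a, b] (by
      simp [Fin.sum_univ_three]; ring)
      (by
        simp only [Fin.sum_univ_three]
        simp only [Matrix.cons_val_zero, Matrix.cons_val_one, Matrix.head_cons,
          Matrix.cons_val_two, Matrix.tail_cons]
        have : (-a - b) • A + a • B + b • C = a • uB + b • uC := by
          simp only [huBdef, huCdef, smul_sub, sub_smul, neg_smul]
          abel
        rw [this, hab])
    constructor
    · simpa using h 1 (Finset.mem_univ _)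
    · simpa using h 2 (Finset.mem_univ _)
  have huCne : uC ≠ 0 := by
    intro h
    have := (hLI 0 1 (by simp [h])).2
    norm_num at this
  -- normal vector
  have hVperp : Module.finrank ℝ (Vᗮ : Submodule ℝ (EuclideanSpace ℝ (Fin 3))) = 1 := by
    have h3 := V.finrank_add_finrank_orthogonal
    rw [hPl, finrank_euclideanSpace_fin] at h3
    omega
  have hVperpne : (Vᗮ : Submodule ℝ (EuclideanSpace ℝ (Fin 3))) ≠ ⊥ := by
    intro h
    rw [h, finrank_bot] at hVperp
    norm_num at hVperp
  obtain ⟨n', hn'mem, hn'ne⟩ := Submodule.exists_mem_ne_zero_of_ne_bot hVperpne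
  set n : EuclideanSpace ℝ (Fin 3) := (‖n'‖⁻¹ : ℝ) • n' with hndef
  have hn1 : ‖n‖ = 1 := norm_smul_inv_norm hn'ne
  have hnne : n ≠ 0 := by
    intro h
    rw [h, norm_zero] at hn1
    norm_num at hn1
  have hnmem : n ∈ Vᗮ := Submodule.smul_mem _ _ hn'mem
  have hspan : (ℝ ∙ n) = Vᗮ := by
    apply Submodule.eq_of_le_of_finrank_le
    · rwa [Submodule.span_singleton_le_iff_mem]
    · rw [hVperp, finrank_span_singleton hnne]
  have hVorth : V = (ℝ ∙ n)ᗮ := by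
    rw [hspan, Submodule.orthogonal_orthogonal]
  have hnV : ∀ v ∈ V, ⟪n, v⟫ = 0 := fun v hv =>
    real_inner_comm n v ▸ (Submodule.mem_orthogonal V n).1 hnmem v hv
  -- norm-square splitting
  have hns : ∀ v ∈ V, ∀ t : ℝ, ‖v + t • n‖ ^ 2 = ‖v‖ ^ 2 + t ^ 2 := by
    intro v hv t
    rw [norm_add_sq_real, real_inner_smul_right, real_inner_comm, hnV v hv]
    rw [norm_smul, hn1]
    simp [sq_abs]
  have hPlne : (Pl : Set (EuclideanSpace ℝ (Fin 3))).Nonempty := ⟨A, hA⟩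
  -- distance to the plane
  have hdist : ∀ v ∈ V, ∀ t : ℝ, infDist ((v + t • n) + A) (Pl : Set (EuclideanSpace ℝ (Fin 3))) = |t| := by
    intro v hv t
    apply le_antisymm
    · have hmem : v + A ∈ (Pl : Set (EuclideanSpace ℝ (Fin 3))) := by
        have := AffineSubspace.vadd_mem_of_mem_direction (hV ▸ hv) hA
        simpa [vadd_eq_add, add_comm] using this
      have := infDist_le_dist_of_mem (x := (v + t • n) + A) hmem
      calc infDist ((v + t • n) + A) (Pl : Set (EuclideanSpace ℝ (Fin 3)))
          ≤ dist ((v + t • n) + A) (v + A) := this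
        _ = |t| := by
            rw [dist_eq_norm]
            have : (v + t • n) + A - (v + A) = t • n := by abel
            rw [this, norm_smul, hn1]
            simp
    · rw [infDist_eq_iInf]
      have : Nonempty (Pl : Set (EuclideanSpace ℝ (Fin 3))) := hPlne.to_subtype
      apply le_ciInf
      intro y
      rw [dist_eq_norm]
      have hyV : (A : EuclideanSpace ℝ (Fin 3)) - y ∈ V := by
        have := AffineSubspace.vsub_mem_direction hA y.2
        simpa [vsub_eq_sub] using this
      have hrw : (v + t • n) + A - (y : EuclideanSpace ℝ (Fin 3)) = (v + (A - y)) + t • n := by abel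
      rw [hrw]
      have hsq := hns (v + (A - y)) (V.add_mem hv hyV) t
      have h1 : |t| ^ 2 ≤ ‖(v + (A - y)) + t • n‖ ^ 2 := by
        rw [hsq, sq_abs]
        nlinarith [sq_nonneg ‖v + ((A : EuclideanSpace ℝ (Fin 3)) - y)‖]
      nlinarith [abs_nonneg t, norm_nonneg ((v + ((A : EuclideanSpace ℝ (Fin 3)) - y)) + t • n)]
  -- decomposition of an arbitrary point
  have hdecomp : ∀ P : EuclideanSpace ℝ (Fin 3), ∃ v ∈ V, ∃ t : ℝ, P = (v + t • n) + A := by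
    intro P
    refine ⟨(P - A) - ⟪n, P - A⟫ • n, ?_, ⟪n, P - A⟫, by abel⟩
    rw [hVorth, Submodule.mem_orthogonal_singleton_iff_inner_right]
    rw [inner_sub_right, real_inner_smul_right, real_inner_self_eq_norm_sq, hn1]
    ring
  -- Gram data
  set bb : ℝ := ⟪uB, uB⟫ with hbb
  set cc : ℝ := ⟪uC, uC⟫ with hcc
  set bc : ℝ := ⟪uB, uC⟫ with hbc
  set d : ℝ := bb * cc - bc ^ 2 with hd
  have hccpos : 0 < cc := by
    rw [hcc, real_inner_self_eq_norm_sq]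
    have : ‖uC‖ ≠ 0 := norm_ne_zero_iff.2 huCne
    positivity
  have hdpos : 0 < d := by
    have hwne : cc • uB - bc • uC ≠ 0 := by
      intro h
      have : cc • uB + (-bc) • uC = 0 := by
        rw [neg_smul, ← sub_eq_add_neg]; exact h
      exact absurd (hLI cc (-bc) this).1 (ne_of_gt hccpos)
    have hw2 : ‖cc • uB - bc • uC‖ ^ 2 = cc * d := by
      rw [norm_sub_sq_real, real_inner_smul_left, real_inner_smul_right,
        norm_smul, norm_smul]
      have e1 : ‖uB‖ ^ 2 = bb := (real_inner_self_eq_norm_sq uB).symm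
      have e2 : ‖uC‖ ^ 2 = cc := (real_inner_self_eq_norm_sq uC).symm
      rw [mul_pow, mul_pow, Real.norm_eq_abs, Real.norm_eq_abs, sq_abs, sq_abs, e1, e2, ← hbc]
      rw [hd]; ring
    have : 0 < ‖cc • uB - bc • uC‖ ^ 2 := pow_pos (norm_pos_iff.2 hwne) 2
    nlinarith
  -- the family of horizontal components
  set al : ℝ → ℝ := fun R => (bb + (rA + R) ^ 2 - (rB + R) ^ 2) / 2 with hal
  set be : ℝ → ℝ := fun R => (cc + (rA + R) ^ 2 - (rC + R) ^ 2) / 2 with hbe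
  set vf : ℝ → EuclideanSpace ℝ (Fin 3) := fun R =>
    d⁻¹ • ((al R * cc - be R * bc) • uB + (be R * bb - al R * bc) • uC) with hvf
  have hvfV : ∀ R, vf R ∈ V := fun R =>
    Submodule.smul_mem _ _ (V.add_mem (Submodule.smul_mem _ _ huB) (Submodule.smul_mem _ _ huC))
  have hvfB : ∀ R, ⟪vf R, uB⟫ = al R := by
    intro R
    rw [hvf]
    simp only [real_inner_smul_left, inner_add_left]
    rw [← hbb]
    rw [show (⟪uC, uB⟫ : ℝ) = bc from (real_inner_comm uB uC).trans hbc.symm]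
    field_simp
    ring
  have hvfC : ∀ R, ⟪vf R, uC⟫ = be R := by
    intro R
    rw [hvf]
    simp only [real_inner_smul_left, inner_add_left]
    rw [← hcc, ← hbc]
    field_simp
    ring
  -- uniqueness of the horizontal component
  have hspanV : V = Submodule.span ℝ {uB, uC} := by
    symm
    apply Submodule.eq_of_le_of_finrank_le
    · rw [Submodule.span_le]
      rintro x (rfl | rfl)
      · exact huB
      · exact huC
    · rw [hPl]
      have hli2 : LinearIndependent ℝ ![uB, uC] := by
        rw [linearIndependent_fin2]
        refine ⟨huCne, fun a h => ?_⟩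
        have : (1 : ℝ) • uB + (-a) • uC = 0 := by
          simp only [Matrix.cons_val_one, Matrix.head_cons, Matrix.cons_val_zero] at h
          rw [← h]; simp
        exact absurd (hLI 1 (-a) this).1 one_ne_zero
      have := finrank_span_eq_card hli2
      have hrange : Set.range ![uB, uC] = {uB, uC} := by
        simp [Matrix.range_cons, Matrix.range_empty, Set.pair_comm]
      rw [hrange] at this
      rw [this]
      simp
  have huniq : ∀ R : ℝ, ∀ v ∈ V, ⟪v, uB⟫ = al R → ⟪v, uC⟫ = be R → v = vf R := by
    intro R v hv h1 h2
    have hw : v - vf R ∈ V := V.sub_mem hv (hvfV R)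
    have hwB : ⟪v - vf R, uB⟫ = 0 := by rw [inner_sub_left, h1, hvfB]; ring
    have hwC : ⟪v - vf R, uC⟫ = 0 := by rw [inner_sub_left, h2, hvfC]; ring
    have hall : ∀ x ∈ Submodule.span ℝ ({uB, uC} : Set (EuclideanSpace ℝ (Fin 3))),
        ⟪v - vf R, x⟫ = 0 := by
      intro x hx
      induction hx using Submodule.span_induction with
      | mem x hx =>
        rcases hx with rfl | rfl
        · exact hwB
        · exact hwC
      | zero => simp
      | add x y _ _ h1' h2' => rw [inner_add_right, h1', h2']; ring
      | smul a x _ h1' => rw [real_inner_smul_right, h1']; ring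
    have : ⟪v - vf R, v - vf R⟫ = 0 := hall _ (hspanV ▸ hw)
    have := inner_self_eq_zero.1 this
    rw [sub_eq_zero] at this
    exact this
  -- the height-squared function
  set g : ℝ → ℝ := fun R => (rA + R) ^ 2 - ‖vf R‖ ^ 2 with hg
  have hcal : Continuous al := by rw [hal]; fun_prop
  have hcbe : Continuous be := by rw [hbe]; fun_prop
  have hcvf : Continuous vf := by
    rw [hvf]
    fun_prop
  have hcg : Continuous g := by
    rw [hg]
    exact ((continuous_const.add continuous_id).pow 2).sub (hcvf.norm.pow 2)
  have e1 : ‖uB‖ ^ 2 = bb := (real_inner_self_eq_norm_sq uB).symm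
  have e2 : ‖uC‖ ^ 2 = cc := (real_inner_self_eq_norm_sq uC).symm
  have hsqeq : ∀ a b : ℝ, 0 ≤ a → 0 ≤ b → a ^ 2 = b ^ 2 → a = b := by
    intro a b ha hb h
    apply le_antisymm
    · nlinarith
    · nlinarith
  -- forward direction
  have hfwd : ∀ z R : ℝ, 0 ≤ z → 0 < R → g R = z ^ 2 →
      TangentAtHeight Pl A B C rA rB rC z R := by
    intro z R hz hR hgz
    refine ⟨(vf R + z • n) + A, ?_, ?_, ?_, ?_⟩
    · rw [hdist (vf R) (hvfV R) z, abs_of_nonneg hz]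
    · apply hsqeq _ _ dist_nonneg (by positivity)
      rw [dist_eq_norm, show (vf R + z • n) + A - A = vf R + z • n from by abel,
        hns (vf R) (hvfV R) z]
      have : ‖vf R‖ ^ 2 = (rA + R) ^ 2 - z ^ 2 := by
        rw [hg] at hgz; simp only at hgz; linarith
      linarith
    · apply hsqeq _ _ dist_nonneg (by positivity)
      rw [dist_eq_norm, show (vf R + z • n) + A - B = (vf R - uB) + z • n from by
        rw [huBdef]; abel, hns _ (V.sub_mem (hvfV R) huB) z]
      have h1 : ‖vf R - uB‖ ^ 2 = ‖vf R‖ ^ 2 - 2 * al R + bb := by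
        rw [norm_sub_sq_real, hvfB R, e1]
      have h2 : ‖vf R‖ ^ 2 = (rA + R) ^ 2 - z ^ 2 := by
        rw [hg] at hgz; simp only at hgz; linarith
      have h3 : 2 * al R = bb + (rA + R) ^ 2 - (rB + R) ^ 2 := by
        rw [hal]; ring
      linarith
    · apply hsqeq _ _ dist_nonneg (by positivity)
      rw [dist_eq_norm, show (vf R + z • n) + A - C = (vf R - uC) + z • n from by
        rw [huCdef]; abel, hns _ (V.sub_mem (hvfV R) huC) z]
      have h1 : ‖vf R - uC‖ ^ 2 = ‖vf R‖ ^ 2 - 2 * be R + cc := by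
        rw [norm_sub_sq_real, hvfC R, e2]
      have h2 : ‖vf R‖ ^ 2 = (rA + R) ^ 2 - z ^ 2 := by
        rw [hg] at hgz; simp only at hgz; linarith
      have h3 : 2 * be R = cc + (rA + R) ^ 2 - (rC + R) ^ 2 := by
        rw [hbe]; ring
      linarith
  -- backward direction
  have hbwd : ∀ z R : ℝ, TangentAtHeight Pl A B C rA rB rC z R → g R = z ^ 2 := by
    rintro z R ⟨P, hP0, hPA, hPB, hPC⟩
    obtain ⟨v, hv, t, rfl⟩ := hdecomp P
    have hzt : z = |t| := by rw [← hP0, hdist v hv t]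
    have dA : ‖v‖ ^ 2 + t ^ 2 = (rA + R) ^ 2 := by
      rw [← hns v hv t, ← show (v + t • n) + A - A = v + t • n from by abel, ← dist_eq_norm, hPA]
    have dB : ‖v - uB‖ ^ 2 + t ^ 2 = (rB + R) ^ 2 := by
      rw [← hns _ (V.sub_mem hv huB) t,
        ← show (v + t • n) + A - B = (v - uB) + t • n from by rw [huBdef]; abel,
        ← dist_eq_norm, hPB]
    have dC : ‖v - uC‖ ^ 2 + t ^ 2 = (rC + R) ^ 2 := by
      rw [← hns _ (V.sub_mem hv huC) t,
        ← show (v + t • n) + A - C = (v - uC) + t • n from by rw [huCdef]; abel,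
        ← dist_eq_norm, hPC]
    have hvB : ⟪v, uB⟫ = al R := by
      have := norm_sub_sq_real v uB
      rw [e1] at this
      have h3 : 2 * al R = bb + (rA + R) ^ 2 - (rB + R) ^ 2 := by rw [hal]; ring
      linarith
    have hvC : ⟪v, uC⟫ = be R := by
      have := norm_sub_sq_real v uC
      rw [e2] at this
      have h3 : 2 * be R = cc + (rA + R) ^ 2 - (rC + R) ^ 2 := by rw [hbe]; ring
      linarith
    have hveq : v = vf R := huniq R v hv hvB hvC
    rw [hg]
    simp only
    rw [← hveq, hzt, sq_abs]
    linarith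
  -- negativity at 0
  have hg0 : g 0 < 0 := by
    by_contra hcon
    push_neg at hcon
    set v0 : EuclideanSpace ℝ (Fin 3) := vf 0 with hv0
    have h' : ‖v0‖ ^ 2 ≤ rA ^ 2 := by
      rw [hg] at hcon; simp only at hcon; nlinarith
    have hkey : ∀ (u : EuclideanSpace ℝ (Fin 3)) (r : ℝ), 0 < r → rA + r ≤ ‖u‖ →
        2 * ⟪v0, u⟫ = ‖u‖ ^ 2 + rA ^ 2 - r ^ 2 → ∃ s : ℝ, v0 = s • u := by
      intro u r hr hru hinner
      have hv0ne : v0 ≠ 0 := by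
        intro h0
        rw [h0] at hinner
        simp at hinner
        nlinarith
      have h1 : ‖v0 - u‖ ^ 2 ≤ r ^ 2 := by
        rw [norm_sub_sq_real]
        linarith
      have hnv0 : ‖v0‖ ≤ rA := by nlinarith [norm_nonneg v0]
      have hnd : ‖v0 - u‖ ≤ r := by nlinarith [norm_nonneg (v0 - u)]
      have heq : ‖v0 + (u - v0)‖ = ‖v0‖ + ‖u - v0‖ := by
        have e : v0 + (u - v0) = u := by abel
        apply le_antisymm (norm_add_le _ _)
        rw [e, norm_sub_rev]
        linarith
      have hray : SameRay ℝ v0 (u - v0) := sameRay_iff_norm_add.2 heq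
      rcases eq_or_ne (u - v0) 0 with h0 | h0
      · exact ⟨1, by rw [one_smul, ← sub_eq_zero]; rw [← neg_sub u v0, h0, neg_zero]⟩
      · obtain ⟨r1, r2, hr1, hr2, hrr⟩ := hray.exists_pos hv0ne h0
        refine ⟨(r1 + r2)⁻¹ * r2, ?_⟩
        have hsum : (r1 + r2) • v0 = r2 • u := by
          rw [add_smul, hrr, smul_sub]; abel
        have hne : r1 + r2 ≠ 0 := by positivity
        calc v0 = (r1 + r2)⁻¹ • ((r1 + r2) • v0) := by
              rw [smul_smul, inv_mul_cancel₀ hne, one_smul]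
          _ = ((r1 + r2)⁻¹ * r2) • u := by rw [hsum, smul_smul]
    have hBu : rA + rB ≤ ‖uB‖ := by
      rwa [show ‖uB‖ = dist A B from by rw [dist_eq_norm, huBdef, norm_sub_rev]]
    have hCu : rA + rC ≤ ‖uC‖ := by
      rwa [show ‖uC‖ = dist A C from by rw [dist_eq_norm, huCdef, norm_sub_rev]]
    obtain ⟨s, hs⟩ := hkey uB rB hrB hBu (by
      rw [hv0, hvfB 0, hal, e1]; ring)
    obtain ⟨s', hs'⟩ := hkey uC rC hrC hCu (by
      rw [hv0, hvfC 0, hbe, e2]; ring)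
    have : s • uB + (-s') • uC = 0 := by rw [← hs, neg_smul, ← hs']; abel
    obtain ⟨hs0, _⟩ := hLI s (-s') this
    rw [hs0, zero_smul] at hs
    have hv0ne : v0 ≠ 0 := by
      intro h0
      have := hvfB 0
      rw [← hv0, h0] at this
      simp only [inner_zero_left] at this
      rw [hal] at this
      nlinarith
    exact hv0ne hs
  exact ⟨g, hcg, hg0, fun z R hz hR =>
    ⟨fun h => hbwd z R h, fun h => hfwd z R hz hR h⟩⟩

private lemma key_real (g : ℝ → ℝ) (hg : Continuous g) (h0 : g 0 < 0) (R₀ z₀ : ℝ)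
    (hR₀ : 0 < R₀) (hgR₀ : g R₀ = z₀^2) (hz₀ : 0 < z₀) :
    (∀ z, 0 ≤ z → z ≤ z₀ → ∃ R, 0 < R ∧ g R = z^2) ∧
    (∀ z₁ z₂, 0 ≤ z₁ → z₁ ≤ z₂ → z₂ ≤ z₀ →
      sInf {R | 0 < R ∧ g R = z₁^2} ≤ sInf {R | 0 < R ∧ g R = z₂^2}) := by
  have hiv : ∀ m z : ℝ, 0 < m → 0 ≤ z → z^2 ≤ g m → ∃ R, 0 < R ∧ R ≤ m ∧ g R = z^2 := by
    intro m z hm hz hzm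
    have : z^2 ∈ Set.Icc (g 0) (g m) := ⟨le_trans h0.le (by positivity), hzm⟩
    obtain ⟨R, hR, hgR⟩ := intermediate_value_Icc hm.le hg.continuousOn this
    refine ⟨R, lt_of_le_of_ne hR.1 ?_, hR.2, hgR⟩
    rintro rfl
    exact absurd hgR.symm.le (not_le.2 (lt_of_lt_of_le h0 (by positivity)))
  have hexists : ∀ z, 0 ≤ z → z ≤ z₀ → ∃ R, 0 < R ∧ R ≤ R₀ ∧ g R = z^2 := by
    intro z hz hzz
    exact hiv R₀ z hR₀ hz (hgR₀ ▸ pow_le_pow_left₀ hz hzz 2)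
  constructor
  · exact fun z hz hzz => (hexists z hz hzz).imp fun R ⟨h1, _, h3⟩ => ⟨h1, h3⟩
  · intro z₁ z₂ hz₁ h12 h20
    set S₂ := {R | 0 < R ∧ g R = z₂^2} with hS₂
    have hz₂ : 0 ≤ z₂ := le_trans hz₁ h12
    have hS₂eq : S₂ = {R | 0 ≤ R ∧ g R = z₂^2} := by
      ext R
      simp only [hS₂, Set.mem_setOf_eq]
      constructor
      · rintro ⟨h1, h2⟩; exact ⟨h1.le, h2⟩
      · rintro ⟨h1, h2⟩
        refine ⟨lt_of_le_of_ne h1 ?_, h2⟩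
        rintro rfl
        exact absurd h2.symm.le (not_le.2 (lt_of_lt_of_le h0 (by positivity)))
    have hclosed : IsClosed S₂ := by
      rw [hS₂eq]
      exact (isClosed_Ici.preimage continuous_id).inter (isClosed_singleton.preimage hg)
    have hne : S₂.Nonempty := by
      obtain ⟨R, h1, _, h3⟩ := hexists z₂ hz₂ h20
      exact ⟨R, h1, h3⟩
    have hbdd : BddBelow S₂ := ⟨0, fun R hR => hR.1.le⟩
    have hmem := hclosed.csInf_mem hne hbdd
    obtain ⟨R, hR1, hR2, hR3⟩ := hiv (sInf S₂) z₁ hmem.1 hz₁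
      (by rw [hmem.2]; exact pow_le_pow_left₀ hz₁ h12 2)
    exact le_trans (csInf_le ⟨0, fun r hr => hr.1.le⟩ ⟨hR1, hR3⟩) hR2

/-- If a sphere of positive radius is tangent to three interior-disjoint balls centered
on a plane at some height z₀ > 0, then for every 0 ≤ z ≤ z₀ there is a tangent sphere
of positive radius at height z, and the smallest positive tangent radius is a
non-decreasing function of the height. -/
theorem smallest_tangent_radius_mono
    (Pl : AffineSubspace ℝ (EuclideanSpace ℝ (Fin 3)))
    (hPl : Module.finrank ℝ Pl.direction = 2)
    (A B C : EuclideanSpace ℝ (Fin 3)) (hA : A ∈ Pl) (hB : B ∈ Pl) (hC : C ∈ Pl)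
    (haff : AffineIndependent ℝ ![A, B, C])
    (rA rB rC : ℝ) (hrA : 0 < rA) (hrB : 0 < rB) (hrC : 0 < rC)
    (hAB : rA + rB ≤ dist A B) (hAC : rA + rC ≤ dist A C) (hBC : rB + rC ≤ dist B C)
    (z₀ : ℝ) (hz₀ : 0 < z₀)
    (hex : ∃ R : ℝ, 0 < R ∧ TangentAtHeight Pl A B C rA rB rC z₀ R) :
    (∀ z : ℝ, 0 ≤ z → z ≤ z₀ → ∃ R : ℝ, 0 < R ∧ TangentAtHeight Pl A B C rA rB rC z R) ∧
    (∀ z₁ z₂ : ℝ, 0 ≤ z₁ → z₁ ≤ z₂ → z₂ ≤ z₀ →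
      sInf {R : ℝ | 0 < R ∧ TangentAtHeight Pl A B C rA rB rC z₁ R} ≤
      sInf {R : ℝ | 0 < R ∧ TangentAtHeight Pl A B C rA rB rC z₂ R}) := by
  obtain ⟨g, hcg, hg0, hiff⟩ := exists_g Pl hPl A B C hA hB hC haff rA rB rC hrA hrB hrC hAB hAC hBC
  obtain ⟨R₀, hR₀, htan⟩ := hex
  have hgR₀ : g R₀ = z₀ ^ 2 := (hiff z₀ R₀ hz₀.le hR₀).1 htan
  obtain ⟨hex', hmono⟩ := key_real g hcg hg0 R₀ z₀ hR₀ hgR₀ hz₀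
  have hset : ∀ z : ℝ, 0 ≤ z →
      {R : ℝ | 0 < R ∧ TangentAtHeight Pl A B C rA rB rC z R} = {R : ℝ | 0 < R ∧ g R = z ^ 2} := by
    intro z hz
    ext R
    simp only [Set.mem_setOf_eq]
    constructor
    · rintro ⟨hR, h⟩; exact ⟨hR, (hiff z R hz hR).1 h⟩
    · rintro ⟨hR, h⟩; exact ⟨hR, (hiff z R hz hR).2 h⟩
  constructor
  · intro z hz hzz
    obtain ⟨R, hR, hgR⟩ := hex' z hz hzz
    exact ⟨R, hR, (hiff z R hz hR).2 hgR⟩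
  · intro z₁ z₂ h1 h12 h20
    rw [hset z₁ h1, hset z₂ (h1.trans h12)]
    exact hmono z₁ z₂ h1 h12 h20
end

section
/- For all real numbers a, b, x with a > 0, b > 0 and x ≥ a + b, one has x⁴ − (x² − a²)² − (x² − b²)² ≤ −2a²b², and in particular x⁴ − (x² − a²)² − (x² − b²)² < 0. -/
/-- For a, b > 0 and x ≥ a + b one has x⁴ − (x² − a²)² − (x² − b²)² ≤ −2a²b² < 0. -/
theorem quartic_negative (a b x : ℝ) (ha : 0 < a) (hb : 0 < b) (hx : a + b ≤ x) :
    x ^ 4 - (x ^ 2 - a ^ 2) ^ 2 - (x ^ 2 - b ^ 2) ^ 2 ≤ -2 * a ^ 2 * b ^ 2 ∧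
    x ^ 4 - (x ^ 2 - a ^ 2) ^ 2 - (x ^ 2 - b ^ 2) ^ 2 < 0 := by
  have hab : (a + b) ^ 2 ≤ x ^ 2 := by nlinarith
  have h1 : (a - b) ^ 2 ≤ x ^ 2 := by nlinarith
  have key : x ^ 4 - (x ^ 2 - a ^ 2) ^ 2 - (x ^ 2 - b ^ 2) ^ 2 ≤ -2 * a ^ 2 * b ^ 2 := by
    nlinarith [mul_nonneg (sub_nonneg.mpr hab) (sub_nonneg.mpr h1)]
  exact ⟨key, lt_of_le_of_lt key (by nlinarith [mul_pos ha hb, mul_pos (mul_pos ha hb) (mul_pos ha hb)])⟩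
end
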